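/- arXiv:2303.16176 — 4 statements merged into one kernel-verified Lean document; each statement's English description precedes it below -/
import Mathlib

section
/- In a geometric tree (the geometric realization of a finite connected acyclic graph), a subset is path-connected if and only if it is connected. -/
open scoped Classical

noncomputable section

instance dartTop {V : Type*} (G : SimpleGraph V) : TopologicalSpace G.Dart := ⊥

/-- Gluing relation for the geometric realization of a graph: one copy of `[0,1]` per
oriented edge, opposite orientations identified by `t ↦ 1-t`, and starting points of edges
with the same initial vertex identified. -/
def treeRel {V : Type*} (G : SimpleGraph V) :
    (G.Dart × ↥(Set.Icc (0:ℝ) 1)) → (G.Dart × ↥(Set.Icc (0:ℝ) 1)) → Prop :=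
  fun p q =>
    (p.1 = q.1.symm ∧ (p.2 : ℝ) = 1 - (q.2 : ℝ)) ∨
    (p.1.toProd.1 = q.1.toProd.1 ∧ (p.2 : ℝ) = 0 ∧ (q.2 : ℝ) = 0)

/-- The geometric realization of a graph. -/
def TreeSpace {V : Type*} (G : SimpleGraph V) := Quot (treeRel G)

instance {V : Type*} (G : SimpleGraph V) : TopologicalSpace (TreeSpace G) :=
  instTopologicalSpaceQuot

/-!
Let `S` be connected and `x, y ∈ S`. Every point `z` on the arc from `x` to `y` separates `x`
from `y`, witnessed by a map `TreeSpace G → ℝ` that interpolates a vertex labelling linearly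
along the edges and takes some value `c` between its values at `x` and `y` only at `z`: for `z`
inside an edge, label the two sides of that edge (a bridge, since `G` is acyclic) by `0` and `1`;
for `z` a vertex `w`, label `w` by `1/2`, the component of `G - w` containing `x` by `0` and the
rest by `1`. By the intermediate value theorem `S` contains `z`, hence the whole arc.
-/

open Set SimpleGraph unitInterval

namespace SimpleGraph

variable {V : Type*} {G : SimpleGraph V}

theorem Dart.deleteEdges_adj_of_edge_ne {d e : G.Dart} (h : e.edge ≠ d.edge) :
    (G.deleteEdges {d.edge}).Adj e.fst e.snd :=
  (deleteEdges_adj ..).2 ⟨e.adj, h⟩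

theorem IsAcyclic.not_reachable_deleteEdges_dart (hG : G.IsAcyclic) (d : G.Dart) :
    ¬ (G.deleteEdges {d.edge}).Reachable d.fst d.snd :=
  isAcyclic_iff_forall_isBridge.mp hG d.edge_mem

theorem IsAcyclic.not_reachable_deleteIncidenceSet (hG : G.IsAcyclic) {u v w : V}
    {p : G.Walk u v} (hp : p.IsPath) (hw : w ∈ p.support) (hu : u ≠ w) :
    ¬ (G.deleteIncidenceSet w).Reachable u v := by
  rintro ⟨q⟩
  have hq : w ∈ q.support := by
    obtain rfl : p = (q.mapLe (G.deleteIncidenceSet_le w)).bypass :=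
      congrArg Subtype.val <|
        (hG.subsingleton_path u v).elim ⟨p, hp⟩ ⟨_, Walk.bypass_isPath _⟩
    simpa only [Walk.support_mapLe_eq_support] using Walk.support_bypass_subset_support _ hw
  have hnil : ¬ q.Nil := fun h =>
    hu <| Eq.symm <| by simpa [Walk.nil_iff_support_eq.mp h] using hq
  exact (G.support_deleteIncidenceSet_subset w (mem_support_of_mem_walk_support q hnil hq)).2 rfl

end SimpleGraph

namespace TreeSpace

variable {V : Type*} {G : SimpleGraph V} {S : Set (TreeSpace G)}

instance : DiscreteTopology G.Dart := ⟨rfl⟩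

def mk (d : G.Dart) (t : I) : TreeSpace G := Quot.mk _ (d, t)

theorem exists_mk_eq (z : TreeSpace G) : ∃ d t, mk d t = z := by
  obtain ⟨⟨d, t⟩, rfl⟩ := Quot.exists_rep z
  exact ⟨d, t, rfl⟩

theorem mk_symm (d : G.Dart) (t : I) : mk d.symm t = mk d (σ t) :=
  Quot.sound (Or.inl ⟨rfl, (sub_sub_cancel 1 (t : ℝ)).symm⟩)

theorem mk_eq_mk_symm (d : G.Dart) (t : I) : mk d t = mk d.symm (σ t) := by
  rw [mk_symm, symm_symm]

theorem mk_zero_eq_mk_zero {d e : G.Dart} (h : d.fst = e.fst) : mk d 0 = mk e 0 :=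
  Quot.sound (Or.inr ⟨h, rfl, rfl⟩)

theorem mk_one (d : G.Dart) : mk d 1 = mk d.symm 0 := by
  rw [mk_symm, symm_zero]

theorem continuous_mk (d : G.Dart) : Continuous (mk d) :=
  continuous_quot_mk.comp (Continuous.prodMk_right d)

def interpolate (h : V → ℝ) : TreeSpace G → ℝ :=
  Quot.lift (fun p => (1 - p.2) * h p.1.fst + p.2 * h p.1.snd) <| by
    rintro ⟨d, s⟩ ⟨e, t⟩ (⟨rfl, hst⟩ | ⟨hde, hs, ht⟩)
    · simp only [Dart.symm_toProd, Prod.fst_swap, Prod.snd_swap] at hst ⊢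
      rw [hst]
      ring
    · simp only at hde hs ht
      rw [hde, hs, ht]
      ring

theorem interpolate_mk (h : V → ℝ) (d : G.Dart) (t : I) :
    interpolate h (mk d t) = (1 - t) * h d.fst + t * h d.snd :=
  rfl

theorem interpolate_mk_zero (h : V → ℝ) (d : G.Dart) : interpolate h (mk d 0) = h d.fst := by
  simp [interpolate_mk]

theorem interpolate_mk_of_eq {h : V → ℝ} {e : G.Dart} (he : h e.fst = h e.snd) (t : I) :
    interpolate h (mk e t) = h e.fst := by
  rw [interpolate_mk, ← he]
  ring

theorem continuous_interpolate (h : V → ℝ) : Continuous (interpolate (G := G) h) := by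
  have hv (g : G.Dart → ℝ) : Continuous fun p : G.Dart × I => g p.1 :=
    continuous_of_discreteTopology.comp continuous_fst
  have ht : Continuous fun p : G.Dart × I => (p.2 : ℝ) :=
    continuous_subtype_val.comp continuous_snd
  exact continuous_quot_lift _ <|
    ((continuous_const.sub ht).mul (hv fun d => h d.fst)).add (ht.mul (hv fun d => h d.snd))

def edgeSide (d : G.Dart) (v : V) : ℝ :=
  if (G.deleteEdges {d.edge}).Reachable d.fst v then 0 else 1

theorem edgeSide_eq_zero_or_one (d : G.Dart) (v : V) : edgeSide d v = 0 ∨ edgeSide d v = 1 := by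
  unfold edgeSide
  split_ifs <;> simp

theorem edgeSide_eq_of_edge_ne {d e : G.Dart} (he : e.edge ≠ d.edge) :
    edgeSide d e.fst = edgeSide d e.snd := by
  have hadj := Dart.deleteEdges_adj_of_edge_ne he
  unfold edgeSide
  congr 1
  exact propext ⟨fun h => h.trans hadj.reachable, fun h => h.trans hadj.symm.reachable⟩

theorem interpolate_edgeSide_mk (hG : G.IsAcyclic) (d : G.Dart) (t : I) :
    interpolate (edgeSide d) (mk d t) = t := by
  rw [interpolate_mk, edgeSide, edgeSide, if_pos Reachable.rfl,
    if_neg (hG.not_reachable_deleteEdges_dart d)]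
  ring

theorem eq_mk_of_interpolate_edgeSide_eq (hG : G.IsAcyclic) {d : G.Dart} {t : I}
    (ht₀ : 0 < (t : ℝ)) (ht₁ : (t : ℝ) < 1) {z : TreeSpace G}
    (hz : interpolate (edgeSide d) z = t) : z = mk d t := by
  obtain ⟨e, s, rfl⟩ := exists_mk_eq z
  by_cases he : e.edge = d.edge
  · obtain rfl | rfl := (dart_edge_eq_iff e d).mp he
    · rw [interpolate_edgeSide_mk hG] at hz
      rw [Subtype.ext hz]
    · rw [mk_symm] at hz ⊢
      rw [interpolate_edgeSide_mk hG] at hz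
      rw [Subtype.ext hz]
  · rw [interpolate_mk_of_eq (edgeSide_eq_of_edge_ne he)] at hz
    rcases edgeSide_eq_zero_or_one d e.fst with h | h <;> linarith

theorem mk_mem_of_mem_of_mem (hS : IsPreconnected S) (hG : G.IsAcyclic) {d : G.Dart}
    {a b t : I} (ha : mk d a ∈ S) (hb : mk d b ∈ S) (hat : a ≤ t) (htb : t ≤ b) :
    mk d t ∈ S := by
  rcases hat.eq_or_lt with rfl | hat
  · exact ha
  rcases htb.eq_or_lt with rfl | htb
  · exact hb
  have ht : (t : ℝ) ∈
      Icc (interpolate (edgeSide d) (mk d a)) (interpolate (edgeSide d) (mk d b)) := by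
    rw [interpolate_edgeSide_mk hG, interpolate_edgeSide_mk hG]
    exact ⟨hat.le, htb.le⟩
  obtain ⟨z, hzS, hz⟩ := hS.intermediate_value ha hb (continuous_interpolate _).continuousOn ht
  have ht₀ : 0 < (t : ℝ) := a.2.1.trans_lt (Subtype.coe_lt_coe.2 hat)
  have ht₁ : (t : ℝ) < 1 := (Subtype.coe_lt_coe.2 htb).trans_le b.2.2
  rwa [eq_mk_of_interpolate_edgeSide_eq hG ht₀ ht₁ hz] at hzS

theorem joinedIn_mk_mk (hS : IsPreconnected S) (hG : G.IsAcyclic) (d : G.Dart) {a b : I}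
    (ha : mk d a ∈ S) (hb : mk d b ∈ S) : JoinedIn S (mk d a) (mk d b) := by
  wlog hab : a ≤ b generalizing a b
  · exact (this hb ha (le_of_not_ge hab)).symm
  let f : ℝ → TreeSpace G := IccExtend zero_le_one (mk d)
  have hpc : IsPathConnected (f '' Icc (a : ℝ) b) :=
    ((convex_Icc (a : ℝ) b).isPathConnected (nonempty_Icc.2 hab)).image
      (continuous_mk d).Icc_extend'
  have hjoin := hpc.joinedIn _ (mem_image_of_mem f (left_mem_Icc.2 hab))
    _ (mem_image_of_mem f (right_mem_Icc.2 hab))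
  simp only [f, IccExtend_val] at hjoin
  refine hjoin.mono ?_
  rintro _ ⟨s, ⟨has, hsb⟩, rfl⟩
  dsimp only
  rw [IccExtend_of_mem _ _ ⟨a.2.1.trans has, hsb.trans b.2.2⟩]
  exact mk_mem_of_mem_of_mem hS hG ha hb has hsb

def vertexSide (G : SimpleGraph V) (w a v : V) : ℝ :=
  if v = w then 1 / 2 else if (G.deleteIncidenceSet w).Reachable a v then 0 else 1

theorem vertexSide_self (w a : V) : vertexSide G w a w = 1 / 2 :=
  if_pos rfl

theorem vertexSide_of_reachable {w a v : V} (hv : v ≠ w)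
    (h : (G.deleteIncidenceSet w).Reachable a v) : vertexSide G w a v = 0 := by
  rw [vertexSide, if_neg hv, if_pos h]

theorem vertexSide_of_not_reachable {w a v : V} (hv : v ≠ w)
    (h : ¬ (G.deleteIncidenceSet w).Reachable a v) : vertexSide G w a v = 1 := by
  rw [vertexSide, if_neg hv, if_neg h]

theorem vertexSide_eq_zero_or_one {w a v : V} (hv : v ≠ w) :
    vertexSide G w a v = 0 ∨ vertexSide G w a v = 1 := by
  rw [vertexSide, if_neg hv]
  split_ifs <;> simp

theorem vertexSide_eq_of_ne {w a : V} {e : G.Dart} (h₁ : e.fst ≠ w) (h₂ : e.snd ≠ w) :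
    vertexSide G w a e.fst = vertexSide G w a e.snd := by
  have hadj : (G.deleteIncidenceSet w).Adj e.fst e.snd :=
    deleteIncidenceSet_adj.2 ⟨e.adj, h₁, h₂⟩
  rw [vertexSide, vertexSide, if_neg h₁, if_neg h₂]
  congr 1
  exact propext ⟨fun h => h.trans hadj.reachable, fun h => h.trans hadj.symm.reachable⟩

theorem exists_eq_mk_zero_of_interpolate_vertexSide_eq {w a : V} {z : TreeSpace G}
    (hz : interpolate (vertexSide G w a) z = 1 / 2) : ∃ e : G.Dart, e.fst = w ∧ z = mk e 0 := by
  have eq_zero_of_fst_eq : ∀ (e : G.Dart) (s : I), e.fst = w →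
      interpolate (vertexSide G w a) (mk e s) = 1 / 2 → s = 0 := by
    intro e s he hz
    rw [interpolate_mk, he, vertexSide_self] at hz
    apply Subtype.ext
    rcases vertexSide_eq_zero_or_one (G := G) (a := a) (he ▸ e.snd_ne_fst) with h | h <;>
      · rw [h] at hz
        simp only [Icc.coe_zero]
        linarith
  obtain ⟨e, s, rfl⟩ := exists_mk_eq z
  by_cases h₁ : e.fst = w
  · exact ⟨e, h₁, by rw [eq_zero_of_fst_eq e s h₁ hz]⟩
  by_cases h₂ : e.snd = w
  · rw [mk_eq_mk_symm] at hz ⊢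
    exact ⟨e.symm, h₂, by rw [eq_zero_of_fst_eq e.symm _ h₂ hz]⟩
  rw [interpolate_mk_of_eq (vertexSide_eq_of_ne h₁ h₂)] at hz
  rcases vertexSide_eq_zero_or_one (G := G) (a := a) h₁ with h | h <;> norm_num [h] at hz

theorem mk_zero_mem_of_interpolate_vertexSide (hS : IsPreconnected S) {w a : V}
    {x y : TreeSpace G} (hx : x ∈ S) (hy : y ∈ S)
    (hxw : interpolate (vertexSide G w a) x ≤ 1 / 2)
    (hyw : 1 / 2 ≤ interpolate (vertexSide G w a) y)
    {e : G.Dart} (he : e.fst = w) : mk e 0 ∈ S := by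
  obtain ⟨z, hzS, hz⟩ :=
    hS.intermediate_value hx hy (continuous_interpolate _).continuousOn ⟨hxw, hyw⟩
  obtain ⟨e', he', rfl⟩ := exists_eq_mk_zero_of_interpolate_vertexSide_eq hz
  rwa [mk_zero_eq_mk_zero (he'.trans he.symm)] at hzS

theorem joinedIn_of_isPath (hS : IsPreconnected S) (hG : G.IsAcyclic) {u v : V}
    (p : G.Walk u v) (hp : p.IsPath) {d e : G.Dart} (hd : d.fst = u) (he : e.fst = v)
    (hdS : mk d 0 ∈ S) (heS : mk e 0 ∈ S) : JoinedIn S (mk d 0) (mk e 0) := by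
  induction p generalizing d with
  | nil =>
    rw [mk_zero_eq_mk_zero (hd.trans he.symm)]
    exact JoinedIn.refl heS
  | @cons u u' v hadj q ih =>
    let d' : G.Dart := ⟨(u, u'), hadj⟩
    rw [mk_zero_eq_mk_zero (show d.fst = d'.fst from hd)] at hdS ⊢
    have hu'S : mk d'.symm 0 ∈ S := by
      by_cases hu'v : u' = v
      · rwa [mk_zero_eq_mk_zero (show d'.symm.fst = e.fst from hu'v.trans he.symm)]
      have hsep : ¬ (G.deleteIncidenceSet u').Reachable u v :=
        hG.not_reachable_deleteIncidenceSet hp (by simp) hadj.ne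
      refine mk_zero_mem_of_interpolate_vertexSide hS (w := u') (a := u) hdS heS ?_ ?_ rfl
      · rw [interpolate_mk_zero, vertexSide_of_reachable hadj.ne Reachable.rfl]
        norm_num
      · rw [interpolate_mk_zero, he, vertexSide_of_not_reachable (Ne.symm hu'v) hsep]
        norm_num
    refine (joinedIn_mk_mk hS hG d' hdS (by rwa [mk_one])).trans ?_
    rw [mk_one]
    exact ih hp.of_cons rfl he hu'S

theorem mk_symm_zero_mem_and_joinedIn (hS : IsPreconnected S) (hG : G.IsAcyclic) {d e : G.Dart}
    {a b : I} (hx : mk d a ∈ S) (hy : mk e b ∈ S) (hde : e.edge ≠ d.edge)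
    (hside : ¬ (G.deleteEdges {d.edge}).Reachable d.fst e.fst) :
    mk d.symm 0 ∈ S ∧ JoinedIn S (mk d a) (mk d.symm 0) := by
  have hle : G.deleteIncidenceSet d.snd ≤ G.deleteEdges {d.edge} :=
    deleteEdges_anti (singleton_subset_iff.2 ⟨d.edge_mem, Sym2.mem_mk_right _ _⟩)
  have hfar : ∀ v, ¬ (G.deleteEdges {d.edge}).Reachable d.fst v →
      1 / 2 ≤ vertexSide G d.snd d.fst v := by
    intro v hv
    by_cases hvw : v = d.snd
    · rw [hvw, vertexSide_self]
    · rw [vertexSide_of_not_reachable hvw fun h => hv (h.mono hle)]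
      norm_num
  have hfst := hfar _ hside
  have hsnd := hfar _ fun h =>
    hside (h.trans (Dart.deleteEdges_adj_of_edge_ne hde).symm.reachable)
  have hmem : mk d.symm 0 ∈ S := by
    refine mk_zero_mem_of_interpolate_vertexSide hS (w := d.snd) (a := d.fst) hx hy ?_ ?_ rfl
    · rw [interpolate_mk, vertexSide_self, vertexSide_of_reachable d.fst_ne_snd Reachable.rfl]
      nlinarith [a.2.2]
    · rw [interpolate_mk]
      nlinarith [b.2.1, b.2.2]
  rw [← mk_one] at hmem ⊢
  exact ⟨hmem, joinedIn_mk_mk hS hG d hx hmem⟩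

theorem exists_mk_zero_mem_and_joinedIn (hS : IsPreconnected S) (hG : G.IsAcyclic) {d e : G.Dart}
    {a b : I} (hx : mk d a ∈ S) (hy : mk e b ∈ S) (hde : e.edge ≠ d.edge) :
    ∃ c : G.Dart, mk c 0 ∈ S ∧ JoinedIn S (mk d a) (mk c 0) := by
  by_cases hside : (G.deleteEdges {d.edge}).Reachable d.fst e.fst
  · have hside' : ¬ (G.deleteEdges {d.symm.edge}).Reachable d.symm.fst e.fst := by
      rw [Dart.edge_symm]
      exact fun h => hG.not_reachable_deleteEdges_dart d (hside.trans h.symm)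
    rw [mk_eq_mk_symm] at hx ⊢
    have := mk_symm_zero_mem_and_joinedIn hS hG hx hy (by rwa [Dart.edge_symm]) hside'
    rw [Dart.symm_symm] at this
    exact ⟨d, this⟩
  · exact ⟨d.symm, mk_symm_zero_mem_and_joinedIn hS hG hx hy hde hside⟩

theorem joinedIn_of_isPreconnected (hconn : G.Preconnected) (hG : G.IsAcyclic)
    (hS : IsPreconnected S) {x y : TreeSpace G} (hx : x ∈ S) (hy : y ∈ S) : JoinedIn S x y := by
  obtain ⟨d, a, rfl⟩ := exists_mk_eq x
  obtain ⟨e, b, rfl⟩ := exists_mk_eq y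
  by_cases hde : e.edge = d.edge
  · obtain rfl | rfl := (dart_edge_eq_iff e d).mp hde
    · exact joinedIn_mk_mk hS hG e hx hy
    · rw [mk_symm] at hy ⊢
      exact joinedIn_mk_mk hS hG d hx hy
  obtain ⟨c, hcS, hxc⟩ := exists_mk_zero_mem_and_joinedIn hS hG hx hy hde
  obtain ⟨c', hc'S, hyc'⟩ := exists_mk_zero_mem_and_joinedIn hS hG hy hx (Ne.symm hde)
  obtain ⟨q⟩ := hconn c.fst c'.fst
  exact hxc.trans ((joinedIn_of_isPath hS hG q.bypass q.bypass_isPath rfl rfl hcS hc'S).trans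
    hyc'.symm)

end TreeSpace

theorem stmt0_general {V : Type} (G : SimpleGraph V)
    (hconn : G.Connected) (hacyc : G.IsAcyclic) (S : Set (TreeSpace G)) :
    IsPathConnected S ↔ IsConnected S :=
  ⟨IsPathConnected.isConnected, fun h => isPathConnected_iff.2 ⟨h.nonempty, fun _ hx _ hy =>
    TreeSpace.joinedIn_of_isPreconnected hconn.preconnected hacyc h.isPreconnected hx hy⟩⟩

/-- In a geometric tree (the geometric realization of a finite connected acyclic graph),
a subset is path-connected if and only if it is connected. -/
theorem stmt0 {V : Type} [Fintype V] (G : SimpleGraph V)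
    (hconn : G.Connected) (hacyc : G.IsAcyclic) (S : Set (TreeSpace G)) :
    IsPathConnected S ↔ IsConnected S :=
  stmt0_general G hconn hacyc S
end
end

section
/- Let X be a geometric tree and f:X→ℝ continuous with finitely many local minima. Then every connected component of every sublevel set f⁻¹(-∞,t] contains a local minimum of f. Consequently, for every t, the number of connected components of f⁻¹(-∞,t] is at most the number of local minima of f. -/
open scoped Classical

noncomputable section

/-- Sublevel set of a function. -/
def sub {X : Type*} (f : X → ℝ) (t : ℝ) : Set X := {x | f x ≤ t}
/-- A local minimum of `f`: a connected set on which `f` is constant, such that every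
connected set strictly containing it contains a point of strictly larger value. -/
def IsLocMin {X : Type*} [TopologicalSpace X] (f : X → ℝ) (M : Set X) : Prop :=
  IsConnected M ∧ (∃ c : ℝ, ∀ x ∈ M, f x = c) ∧
    ∀ M' : Set X, IsConnected M' → M ⊂ M' → ∃ x ∈ M', ∀ y ∈ M, f y < f x


lemma isClosed_connectedComponentIn' {X : Type*} [TopologicalSpace X] {s : Set X}
    (hs : IsClosed s) (x : X) : IsClosed (connectedComponentIn s x) := by
  by_cases hx : x ∈ s
  · rw [connectedComponentIn_eq_image hx]
    exact hs.isClosedEmbedding_subtypeVal.isClosedMap _ isClosed_connectedComponent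
  · rw [connectedComponentIn_eq_empty hx]
    exact isClosed_empty

lemma key_locmin {X : Type*} [TopologicalSpace X] [CompactSpace X] (f : X → ℝ)
    (hf : Continuous f) (t : ℝ) {x : X} (hx : x ∈ sub f t) :
    ∃ M : Set X, IsLocMin f M ∧ M ⊆ connectedComponentIn (sub f t) x := by
  have hsub : IsClosed (sub f t) := isClosed_le hf continuous_const
  set C := connectedComponentIn (sub f t) x with hC
  have hCsub : C ⊆ sub f t := connectedComponentIn_subset _ _
  have hCcp : IsCompact C := (isClosed_connectedComponentIn' hsub x).isCompact
  have hCne : C.Nonempty := ⟨x, mem_connectedComponentIn hx⟩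
  obtain ⟨m, hmC, hmin⟩ := hCcp.exists_isMinOn hCne hf.continuousOn
  set c := f m with hc
  have hct : c ≤ t := hCsub hmC
  have hmlev : m ∈ f ⁻¹' {c} := rfl
  set M := connectedComponentIn (f ⁻¹' {c}) m with hM
  have hMconn : IsConnected M := isConnected_connectedComponentIn_iff.2 hmlev
  have hMlev : ∀ y ∈ M, f y = c := fun y hy => connectedComponentIn_subset (f ⁻¹' {c}) m hy
  have hmM : m ∈ M := mem_connectedComponentIn hmlev
  have hMsub : M ⊆ sub f t := fun y hy => by
    show f y ≤ t
    rw [hMlev y hy]; exact hct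
  have hMC : M ⊆ C := by
    have : M ⊆ connectedComponentIn (sub f t) m :=
      hMconn.isPreconnected.subset_connectedComponentIn hmM hMsub
    rw [hC, connectedComponentIn_eq hmC]
    exact this
  refine ⟨M, ⟨hMconn, ⟨c, hMlev⟩, ?_⟩, hMC⟩
  intro M' hM' hMM'
  by_contra h
  push_neg at h
  have hle : ∀ z ∈ M', f z ≤ c := by
    intro z hz
    obtain ⟨y, hy, hyz⟩ := h z hz
    calc f z ≤ f y := hyz
    _ = c := hMlev y hy
  have hM'sub : M' ⊆ sub f t := fun z hz => le_trans (hle z hz) hct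
  have hM'C : M' ⊆ C := by
    have : M' ⊆ connectedComponentIn (sub f t) m :=
      hM'.isPreconnected.subset_connectedComponentIn (hMM'.1 hmM) hM'sub
    rw [hC, connectedComponentIn_eq hmC]
    exact this
  have hM'lev : M' ⊆ f ⁻¹' {c} := fun z hz =>
    le_antisymm (hle z hz) (hmin (hM'C hz))
  have : M' ⊆ M :=
    hM'.isPreconnected.subset_connectedComponentIn (hMM'.1 hmM) hM'lev
  exact hMM'.2 this

/-- On a geometric tree, for a continuous function with finitely many local minima, every
connected component of every sublevel set contains a local minimum; consequently the number
of connected components of each sublevel set is at most the number of local minima. -/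
theorem stmt4 {V : Type} [Fintype V] (G : SimpleGraph V)
    (hconn : G.Connected) (hacyc : G.IsAcyclic)
    (f : TreeSpace G → ℝ) (hf : Continuous f)
    (hmin : {M : Set (TreeSpace G) | IsLocMin f M}.Finite) (t : ℝ) :
    (∀ x ∈ sub f t, ∃ M : Set (TreeSpace G), IsLocMin f M ∧
        M ⊆ connectedComponentIn (sub f t) x) ∧
    Cardinal.mk {C : Set (TreeSpace G) // ∃ x ∈ sub f t, C = connectedComponentIn (sub f t) x}
      ≤ Cardinal.mk {M : Set (TreeSpace G) // IsLocMin f M} := by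
  have hcomp : CompactSpace (TreeSpace G) := Quot.compactSpace
  have hpart : ∀ x ∈ sub f t, ∃ M : Set (TreeSpace G), IsLocMin f M ∧
      M ⊆ connectedComponentIn (sub f t) x := fun x hx => key_locmin f hf t hx
  refine ⟨hpart, ?_⟩
  have hchoice : ∀ C : {C : Set (TreeSpace G) //
      ∃ x ∈ sub f t, C = connectedComponentIn (sub f t) x},
      ∃ M : {M : Set (TreeSpace G) // IsLocMin f M}, (M : Set (TreeSpace G)) ⊆ C := by
    rintro ⟨C, x, hx, rfl⟩
    obtain ⟨M, hM, hMC⟩ := hpart x hx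
    exact ⟨⟨M, hM⟩, hMC⟩
  choose g hg using hchoice
  refine Cardinal.mk_le_of_injective (f := g) ?_
  rintro ⟨C, x, hx, rfl⟩ ⟨C', x', hx', rfl⟩ hgg
  have h1 := hg ⟨_, x, hx, rfl⟩
  have h2 := hg ⟨_, x', hx', rfl⟩
  rw [hgg] at h1
  obtain ⟨p, hp⟩ := (g ⟨_, x', hx', rfl⟩).2.1.nonempty
  have e1 : connectedComponentIn (sub f t) x = connectedComponentIn (sub f t) p :=
    connectedComponentIn_eq (h1 hp)
  have e2 : connectedComponentIn (sub f t) x' = connectedComponentIn (sub f t) p :=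
    connectedComponentIn_eq (h2 hp)
  simp only [Subtype.mk_eq_mk]
  rw [e1, e2]
end
end

section
/- Let X be a compact topological space and f:X→ℝ continuous. For every t∈ℝ and every connected component Ω of f⁻¹(-∞,t], there exists a local minimum M of f contained in Ω with f(M)≤t, namely a connected component of the set where f attains its minimum over Ω. In particular, the number of connected components of f⁻¹(-∞,t] is at most the number of local minima of f. -/
open scoped Classical

noncomputable section

/-- On a compact space, every connected component `Ω` of a sublevel set `f⁻¹(-∞,t]` contains
a local minimum `M` with value `≤ t`, namely a connected component of the set where `f`
attains its minimum over `Ω`.  In particular the number of connected components of the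
sublevel set is at most the number of local minima. -/
theorem stmt5 {X : Type} [TopologicalSpace X] [CompactSpace X]
    (f : X → ℝ) (hf : Continuous f) (t : ℝ) :
    (∀ x ∈ sub f t, ∃ M : Set X, M ⊆ connectedComponentIn (sub f t) x ∧ IsLocMin f M ∧
      (∃ c : ℝ, c ≤ t ∧ (∀ y ∈ M, f y = c) ∧
        IsLeast (f '' connectedComponentIn (sub f t) x) c ∧
        (∃ y ∈ {z | z ∈ connectedComponentIn (sub f t) x ∧ f z = c},
          M = connectedComponentIn {z | z ∈ connectedComponentIn (sub f t) x ∧ f z = c} y))) ∧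
    Cardinal.mk {C : Set X // ∃ x ∈ sub f t, C = connectedComponentIn (sub f t) x}
      ≤ Cardinal.mk {M : Set X // IsLocMin f M} := by
  have hS : IsClosed (sub f t) := isClosed_le hf continuous_const
  have main : ∀ x ∈ sub f t, ∃ M : Set X, M ⊆ connectedComponentIn (sub f t) x ∧ IsLocMin f M ∧
      (∃ c : ℝ, c ≤ t ∧ (∀ y ∈ M, f y = c) ∧
        IsLeast (f '' connectedComponentIn (sub f t) x) c ∧
        (∃ y ∈ {z | z ∈ connectedComponentIn (sub f t) x ∧ f z = c},
          M = connectedComponentIn {z | z ∈ connectedComponentIn (sub f t) x ∧ f z = c} y)) := by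
    intro x hx
    set Ω := connectedComponentIn (sub f t) x with hOdef
    have hxΩ : x ∈ Ω := mem_connectedComponentIn hx
    have hΩS : Ω ⊆ sub f t := connectedComponentIn_subset _ _
    have hΩconn : IsConnected Ω := isConnected_connectedComponentIn_iff.mpr hx
    have hΩclosed : IsClosed Ω := by
      refine isClosed_of_closure_subset ?_
      exact hΩconn.isPreconnected.closure.subset_connectedComponentIn
        (subset_closure hxΩ) (hS.closure_subset_iff.mpr hΩS)
    have hΩcomp : IsCompact Ω := hΩclosed.isCompact
    obtain ⟨y, hyΩ, hymin⟩ := hΩcomp.exists_isMinOn ⟨x, hxΩ⟩ hf.continuousOn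
    have hlb : ∀ z ∈ Ω, f y ≤ f z := fun z hz => (isMinOn_iff.mp hymin) z hz
    set c := f y with hc
    set K := {z | z ∈ Ω ∧ f z = c} with hK
    have hyK : y ∈ K := ⟨hyΩ, rfl⟩
    set M := connectedComponentIn K y with hM
    have hMK : M ⊆ K := connectedComponentIn_subset _ _
    have hMΩ : M ⊆ Ω := fun z hz => (hMK hz).1
    have hMconn : IsConnected M := isConnected_connectedComponentIn_iff.mpr hyK
    have hyM : y ∈ M := mem_connectedComponentIn hyK
    have hconst : ∀ z ∈ M, f z = c := fun z hz => (hMK hz).2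
    refine ⟨M, hMΩ, ⟨hMconn, ⟨c, hconst⟩, ?_⟩, c, hΩS hyΩ, hconst,
      ⟨⟨y, hyΩ, rfl⟩, ?_⟩, y, hyK, rfl⟩
    · intro M' hM' hss
      by_contra hcon
      push_neg at hcon
      have hle : ∀ z ∈ M', f z ≤ c := by
        intro z hz
        obtain ⟨w, hwM, hw⟩ := hcon z hz
        rw [hconst w hwM] at hw
        exact hw
      have hM'S : M' ⊆ sub f t := fun z hz => le_trans (hle z hz) (hΩS hyΩ)
      have hyM' : y ∈ M' := hss.1 hyM
      have hM'Ω : M' ⊆ Ω := by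
        have h1 := hM'.isPreconnected.subset_connectedComponentIn hyM' hM'S
        have heq : Ω = connectedComponentIn (sub f t) y := connectedComponentIn_eq (hMΩ hyM)
        rwa [← heq] at h1
      have hM'K : M' ⊆ K := fun z hz => ⟨hM'Ω hz, le_antisymm (hle z hz) (hlb z (hM'Ω hz))⟩
      have : M' ⊆ M := hM'.isPreconnected.subset_connectedComponentIn hyM' hM'K
      exact hss.2 this
    · rintro r ⟨z, hzΩ, rfl⟩
      exact hlb z hzΩ
  refine ⟨main, ?_⟩
  have hchoice : ∀ C : {C : Set X // ∃ x ∈ sub f t, C = connectedComponentIn (sub f t) x},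
      ∃ M : {M : Set X // IsLocMin f M}, (M : Set X).Nonempty ∧ (M : Set X) ⊆ (C : Set X) := by
    rintro ⟨C, x, hx, rfl⟩
    obtain ⟨M, hMC, hloc, _⟩ := main x hx
    exact ⟨⟨M, hloc⟩, hloc.1.nonempty, hMC⟩
  choose g hg1 hg2 using hchoice
  refine Cardinal.mk_le_of_injective (f := g) ?_
  rintro ⟨C₁, hC₁⟩ ⟨C₂, hC₂⟩ h
  obtain ⟨z, hz⟩ := hg1 ⟨C₁, hC₁⟩
  have hz1 : z ∈ C₁ := hg2 ⟨C₁, hC₁⟩ hz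
  have hz2 : z ∈ C₂ := hg2 ⟨C₂, hC₂⟩ (by rw [← h]; exact hz)
  obtain ⟨x₁, hx₁, rfl⟩ := hC₁
  obtain ⟨x₂, hx₂, rfl⟩ := hC₂
  simp only [Subtype.mk.injEq]
  have e1 : connectedComponentIn (sub f t) x₁ = connectedComponentIn (sub f t) z :=
    connectedComponentIn_eq hz1
  have e2 : connectedComponentIn (sub f t) x₂ = connectedComponentIn (sub f t) z :=
    connectedComponentIn_eq hz2
  exact e1.trans e2.symm
end
end

section
/- Let X be a geometric tree, T a labelled generic cellular merge tree, and suppose a configuration x∈Conf(X,T) has all its points on a subset Y⊆X homeomorphic to the unit interval via h, inducing the order x_{σ(1)}≤…≤x_{σ(n)}. Then for every node v of T, the set of indices j such that l_{σ(j)} is a descendant of v is an interval {i,…,k} of consecutive integers. -/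
open scoped Classical

noncomputable section

/-- Combinatorial data for a cellular merge tree: a finite rooted tree with a real value at
each node, strictly increasing towards the root; the root carries an infinite upward ray. -/
structure MergeTreeData where
  n : ℕ
  parent : Fin n → Fin n
  root : Fin n
  hroot : parent root = root
  hreach : ∀ v, ∃ k, parent^[k] v = root
  val : Fin n → ℝ
  hval : ∀ v, v ≠ root → val v < val (parent v)

namespace MergeTreeData

variable (d : MergeTreeData)

/-- Points of the edge attached below each node (for the root: the infinite upward ray). -/
def Carrier : Set (Fin d.n × ℝ) :=
  {p | d.val p.1 ≤ p.2 ∧ (p.1 ≠ d.root → p.2 ≤ d.val (d.parent p.1))}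

/-- Glue the top of each edge to the bottom of the parent's edge. -/
def glueRel : ↥d.Carrier → ↥d.Carrier → Prop := fun a b =>
  a.1.2 = b.1.2 ∧ d.parent a.1.1 = b.1.1 ∧ a.1.2 = d.val (d.parent a.1.1)

/-- The geometric realization of the cellular merge tree `d`. -/
def Space := Quot d.glueRel

instance : TopologicalSpace d.Space := instTopologicalSpaceQuot

/-- The gauge of the canonical cellular merge tree. -/
def gauge : d.Space → ℝ := Quot.lift (fun a => a.1.2) (fun _ _ h => h.1)

/-- `v` is a descendant of `w` (possibly `v = w`). -/
def Desc (v w : Fin d.n) : Prop := ∃ k, d.parent^[k] v = w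

def IsLeafNode (v : Fin d.n) : Prop := ∀ w, d.parent w = v → w = v

def IsBranchNode (v : Fin d.n) : Prop := 2 ≤ Nat.card {w : Fin d.n // d.parent w = v ∧ w ≠ v}

/-- Generic: binary (each node has zero or two children) and leaves take distinct values. -/
def Generic : Prop :=
  (∀ v, Nat.card {w : Fin d.n // d.parent w = v ∧ w ≠ v} = 0 ∨
        Nat.card {w : Fin d.n // d.parent w = v ∧ w ≠ v} = 2) ∧
  ∀ v w, d.IsLeafNode v → d.IsLeafNode w → v ≠ w → d.val v ≠ d.val w

/-- `a` is the least common ancestor of `u` and `w`. -/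
def IsLCA (u w a : Fin d.n) : Prop :=
  d.Desc u a ∧ d.Desc w a ∧ ∀ b, d.Desc u b → d.Desc w b → d.Desc a b

/-- The type of leaves. -/
def Leaf := {v : Fin d.n // d.IsLeafNode v}

end MergeTreeData

/-- Isomorphism of gauged spaces: a homeomorphism commuting with the gauges. -/
def GaugedIso {A B : Type*} [TopologicalSpace A] [TopologicalSpace B]
    (πA : A → ℝ) (πB : B → ℝ) : Prop :=
  ∃ e : A ≃ₜ B, ∀ x, πB (e x) = πA x

/-- A gauged space is a cellular merge tree if it is isomorphic (as a gauged space) to the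
realization of some combinatorial merge tree data. -/
def IsCellularMergeTree {A : Type*} [TopologicalSpace A] (π : A → ℝ) : Prop :=
  ∃ d : MergeTreeData, GaugedIso d.gauge π
/-- The convex hull of a subset of a tree: the intersection of all closed connected
(preconnected) supersets. -/
def ConvH {X : Type*} [TopologicalSpace X] (A : Set X) : Set X :=
  ⋂₀ {C : Set X | A ⊆ C ∧ IsClosed C ∧ IsPreconnected C}

/-- The hull `Conv(v)` associated to a node `v`: convex hull of the union of the sets
indexed by the leaves descendant from `v`. -/
def hullOf {X : Type*} [TopologicalSpace X] (d : MergeTreeData)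
    (F : d.Leaf → Set X) (v : Fin d.n) : Set X :=
  ConvH (⋃ l : d.Leaf, if d.Desc l.1 v then F l else ∅)

/-- The hull-compatibility constraint defining the constrained configuration spaces: hulls
of incomparable nodes are disjoint. -/
def HullCond {X : Type*} [TopologicalSpace X] (d : MergeTreeData) (F : d.Leaf → Set X) : Prop :=
  ∀ v w : Fin d.n, (hullOf d F v ∩ hullOf d F w).Nonempty → d.Desc v w ∨ d.Desc w v

/-- Membership in the constrained point configuration space `Conf(X,T)`. -/
def ConfCond {X : Type*} [TopologicalSpace X] (d : MergeTreeData) (x : d.Leaf → X) : Prop :=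
  Function.Injective x ∧ HullCond d (fun l => ({x l} : Set X))


/-!
Off the finitely many vertex points, each point of the realization of a finite tree lies inside
an edge `e`; since `e` is a bridge, the coordinate along `e`, extended by `0` and `1` on the two
sides of `e`, is continuous with singleton fibres near that point. Such a point cannot be missed
by a preconnected set containing the two ends of an arc through it; density of these points and
closedness then put the sub-arc from `x l₁` to `x l₃` into the hull of the descendants of `v`.
So that hull meets the hull of the leaf `l₂`, and the hull condition makes `v` and `l₂`
comparable.
-/

open Set Filter Topology SimpleGraph

theorem exists_ne_mem_uIcc_of_eventually {p : ℝ → Prop} {t x y : ℝ} (hp : ∀ᶠ c in 𝓝 t, p c)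
    (hxy : x < t ∧ y < t ∨ t < x ∧ t < y) : ∃ c ≠ t, p c ∧ c ∈ uIcc x t ∧ c ∈ uIcc y t := by
  rcases hxy with ⟨hx, hy⟩ | ⟨hx, hy⟩
  · obtain ⟨c, hpc, hxyc, hct⟩ := ((hp.filter_mono nhdsWithin_le_nhds).and
      (((lt_mem_nhds (max_lt hx hy)).filter_mono nhdsWithin_le_nhds).and
        (self_mem_nhdsWithin : ∀ᶠ c in 𝓝[<] t, c < t))).exists
    rw [max_lt_iff] at hxyc
    exact ⟨c, hct.ne, hpc, mem_uIcc.2 (.inl ⟨hxyc.1.le, hct.le⟩),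
      mem_uIcc.2 (.inl ⟨hxyc.2.le, hct.le⟩)⟩
  · obtain ⟨c, hpc, hxyc, hct⟩ := ((hp.filter_mono nhdsWithin_le_nhds).and
      (((gt_mem_nhds (lt_min hx hy)).filter_mono nhdsWithin_le_nhds).and
        (self_mem_nhdsWithin : ∀ᶠ c in 𝓝[>] t, t < c))).exists
    rw [lt_min_iff] at hxyc
    exact ⟨c, hct.ne', hpc, mem_uIcc.2 (.inr ⟨hct.le, hxyc.1.le⟩),
      mem_uIcc.2 (.inr ⟨hct.le, hxyc.2.le⟩)⟩

theorem mem_of_isPreconnected_of_fiber_subsingleton {X : Type*} [TopologicalSpace X]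
    {f : X → ℝ} (hf : Continuous f) {γ : ℝ → X} (hγ : Continuous γ) {a m b : ℝ}
    (ham : a ≤ m) (hmb : m ≤ b) (hinj : InjOn γ (Icc a b))
    (hfib : ∀ᶠ c in 𝓝 (f (γ m)), (f ⁻¹' {c}).Subsingleton)
    {C : Set X} (hC : IsPreconnected C) (ha : γ a ∈ C) (hb : γ b ∈ C) : γ m ∈ C := by
  set t := f (γ m)
  by_contra hmC
  have htC : t ∉ f '' C := by
    rintro ⟨y, hy, hyt⟩
    exact hmC (hfib.self_of_nhds hyt rfl ▸ hy)
  -- `f '' C` is an interval of `ℝ` avoiding `t`, so `γ a` and `γ b` lie on the same side of `t`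
  have hside : f (γ a) < t ∧ f (γ b) < t ∨ t < f (γ a) ∧ t < f (γ b) := by
    have hoc := (hC.image f hf.continuousOn).ordConnected
    have hfa := mem_image_of_mem f ha
    have hfb := mem_image_of_mem f hb
    rcases lt_or_gt_of_ne (ne_of_mem_of_not_mem hfa htC) with h1 | h1 <;>
      rcases lt_or_gt_of_ne (ne_of_mem_of_not_mem hfb htC) with h2 | h2
    · exact .inl ⟨h1, h2⟩
    · exact absurd (hoc.out hfa hfb ⟨h1.le, h2.le⟩) htC
    · exact absurd (hoc.out hfb hfa ⟨h2.le, h1.le⟩) htC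
    · exact .inr ⟨h1, h2⟩
  -- a level `c ≠ t` close to `t` is reached by `f ∘ γ` on both sides of `m`, at the same point
  obtain ⟨c, hct, hfibc, hca, hcb⟩ := exists_ne_mem_uIcc_of_eventually hfib hside
  have hφ : Continuous (f ∘ γ) := hf.comp hγ
  obtain ⟨u₁, hu₁, hu₁c⟩ := intermediate_value_uIcc (a := a) (b := m) hφ.continuousOn hca
  obtain ⟨u₂, hu₂, hu₂c⟩ := intermediate_value_uIcc (a := b) (b := m) hφ.continuousOn hcb
  rw [uIcc_of_le ham] at hu₁
  rw [uIcc_of_ge hmb] at hu₂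
  have hu : u₁ = u₂ := hinj ⟨hu₁.1, hu₁.2.trans hmb⟩ ⟨ham.trans hu₂.1, hu₂.2⟩ (hfibc hu₁c hu₂c)
  have hu₁m : u₁ = m := le_antisymm hu₁.2 (hu ▸ hu₂.1)
  exact hct (hu₁m ▸ hu₁c).symm

theorem mapsTo_of_isPreconnected_of_fiber_subsingleton {X : Type*} [TopologicalSpace X]
    {S : Set X} (hS : S.Finite)
    (hlevel : ∀ x ∉ S, ∃ f : X → ℝ, Continuous f ∧ ∀ᶠ c in 𝓝 (f x), (f ⁻¹' {c}).Subsingleton)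
    {γ : ℝ → X} (hγ : Continuous γ) {a b : ℝ} (hinj : InjOn γ (Icc a b))
    {C : Set X} (hCc : IsClosed C) (hCp : IsPreconnected C) (ha : γ a ∈ C) (hb : γ b ∈ C) :
    MapsTo γ (Icc a b) C := by
  rcases eq_or_ne a b with rfl | hab
  · simpa [MapsTo] using ha
  set F := Icc a b ∩ γ ⁻¹' S
  have hF : F.Countable :=
    ((hS.subset (image_subset_iff.2 fun _ hr => hr.2)).of_finite_image
      (hinj.mono inter_subset_left)).countable
  have hgood : Ioo a b ∩ Fᶜ ⊆ γ ⁻¹' C := by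
    rintro r ⟨hr, hrF⟩
    obtain ⟨f, hf, hfib⟩ := hlevel (γ r) fun hrS => hrF ⟨Ioo_subset_Icc_self hr, hrS⟩
    exact mem_of_isPreconnected_of_fiber_subsingleton hf hγ hr.1.le hr.2.le hinj hfib hCp ha hb
  calc Icc a b = closure (Ioo a b) := (closure_Ioo hab).symm
    _ ⊆ closure (Ioo a b ∩ Fᶜ) :=
      closure_minimal ((hF.dense_compl ℝ).open_subset_closure_inter isOpen_Ioo) isClosed_closure
    _ ⊆ γ ⁻¹' C := closure_minimal hgood (hCc.preimage hγ)

theorem mem_of_isPreconnected_of_homeomorph_unitInterval {X : Type*} [TopologicalSpace X]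
    {S : Set X} (hS : S.Finite)
    (hlevel : ∀ x ∉ S, ∃ f : X → ℝ, Continuous f ∧ ∀ᶠ c in 𝓝 (f x), (f ⁻¹' {c}).Subsingleton)
    {Y : Set X} (h : Y ≃ₜ unitInterval) {p₁ p₂ p₃ : X} (hp₁ : p₁ ∈ Y) (hp₂ : p₂ ∈ Y)
    (hp₃ : p₃ ∈ Y)
    (h12 : ((h ⟨p₁, hp₁⟩ : unitInterval) : ℝ) ≤ ((h ⟨p₂, hp₂⟩ : unitInterval) : ℝ))
    (h23 : ((h ⟨p₂, hp₂⟩ : unitInterval) : ℝ) ≤ ((h ⟨p₃, hp₃⟩ : unitInterval) : ℝ))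
    {C : Set X} (hCc : IsClosed C) (hCp : IsPreconnected C) (h1 : p₁ ∈ C) (h3 : p₃ ∈ C) :
    p₂ ∈ C := by
  set γ : ℝ → X := fun r => (h.symm (projIcc 0 1 zero_le_one r) : X)
  have hγ : Continuous γ := continuous_subtype_val.comp (h.symm.continuous.comp continuous_projIcc)
  have hγinj : InjOn γ (Icc 0 1) := fun r hr r' hr' hrr' => by
    simp only [γ, projIcc_of_mem zero_le_one hr, projIcc_of_mem zero_le_one hr'] at hrr'
    simpa using h.symm.injective (Subtype.ext hrr')
  have hγh : ∀ (p : X) (hp : p ∈ Y), γ (h ⟨p, hp⟩) = p := fun p hp => by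
    simp [γ, projIcc_of_mem zero_le_one (h ⟨p, hp⟩).2]
  have hsub : Icc ((h ⟨p₁, hp₁⟩ : unitInterval) : ℝ) (h ⟨p₃, hp₃⟩) ⊆ Icc 0 1 :=
    Icc_subset_Icc (h ⟨p₁, hp₁⟩).2.1 (h ⟨p₃, hp₃⟩).2.2
  have := mapsTo_of_isPreconnected_of_fiber_subsingleton hS hlevel hγ (hγinj.mono hsub) hCc hCp
    ((hγh p₁ hp₁).symm ▸ h1) ((hγh p₃ hp₃).symm ▸ h3) ⟨h12, h23⟩
  rwa [hγh] at this

namespace TreeSpace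

variable {V : Type*} (G : SimpleGraph V)

instance inst_s18 : DiscreteTopology G.Dart := ⟨rfl⟩

def vertexPt (e : G.Dart) : TreeSpace G := Quot.mk _ (e, ⟨0, left_mem_Icc.2 zero_le_one⟩)

theorem finite_range_vertexPt [Finite V] : (range (vertexPt G)).Finite :=
  haveI : Finite G.Dart := Finite.of_injective _ Dart.toProd_injective
  finite_range _

theorem exists_eq_mk_of_notMem_range_vertexPt {x : TreeSpace G} (hx : x ∉ range (vertexPt G)) :
    ∃ (e : G.Dart) (u : Icc (0 : ℝ) 1), (u : ℝ) ∈ Ioo 0 1 ∧ x = Quot.mk _ (e, u) := by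
  induction x using Quot.ind with | _ p =>
  obtain ⟨e, u, hu0, hu1⟩ := p
  refine ⟨e, ⟨u, hu0, hu1⟩, ⟨lt_of_le_of_ne hu0 ?_, lt_of_le_of_ne hu1 ?_⟩, rfl⟩
  · rintro rfl
    exact hx ⟨e, rfl⟩
  · rintro rfl
    exact hx ⟨e.symm, Quot.sound (.inl ⟨rfl, by norm_num⟩)⟩

def side (e : G.Dart) (w : V) : ℝ :=
  if (G.deleteEdges {e.edge}).Reachable w e.toProd.2 then 1 else 0

variable {G}

theorem side_eq_zero_or_one (e : G.Dart) (w : V) : side G e w = 0 ∨ side G e w = 1 := by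
  unfold side
  split_ifs <;> simp

theorem side_snd (e : G.Dart) : side G e e.toProd.2 = 1 :=
  if_pos (Reachable.refl _)

theorem side_fst (hacyc : G.IsAcyclic) (e : G.Dart) : side G e e.toProd.1 = 0 :=
  if_neg (isBridge_iff.1 (isAcyclic_iff_forall_isBridge.1 hacyc e.edge_mem))

theorem side_fst_eq_side_snd {e d : G.Dart} (hde : d.edge ≠ e.edge) :
    side G e d.toProd.1 = side G e d.toProd.2 := by
  have hadj : (G.deleteEdges {e.edge}).Reachable d.toProd.1 d.toProd.2 :=
    (deleteEdges_adj.2 ⟨d.adj, by simpa [Dart.edge] using hde⟩).reachable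
  have hiff : (G.deleteEdges {e.edge}).Reachable d.toProd.1 e.toProd.2 ↔
      (G.deleteEdges {e.edge}).Reachable d.toProd.2 e.toProd.2 :=
    ⟨hadj.symm.trans, hadj.trans⟩
  simp only [side, hiff]

variable (G)

def edgeCoordAux (e : G.Dart) (p : G.Dart × Icc (0 : ℝ) 1) : ℝ :=
  (1 - p.2) * side G e p.1.toProd.1 + p.2 * side G e p.1.toProd.2

theorem edgeCoordAux_eq_of_treeRel (e : G.Dart) {p q : G.Dart × Icc (0 : ℝ) 1}
    (hpq : treeRel G p q) : edgeCoordAux G e p = edgeCoordAux G e q := by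
  obtain ⟨dp, up⟩ := p
  obtain ⟨dq, uq⟩ := q
  rcases hpq with ⟨rfl, hu⟩ | ⟨hd, hup, huq⟩ <;> dsimp only at *
  · simp only [edgeCoordAux, Dart.symm_toProd, Prod.fst_swap, Prod.snd_swap, hu]
    ring
  · simp only [edgeCoordAux, hd, hup, huq, zero_mul, add_zero]

def edgeCoord (e : G.Dart) : TreeSpace G → ℝ :=
  Quot.lift (edgeCoordAux G e) fun _ _ => edgeCoordAux_eq_of_treeRel G e

theorem continuous_edgeCoord (e : G.Dart) : Continuous (edgeCoord G e) := by
  refine continuous_quot_lift _ (?_ : Continuous fun p : G.Dart × Icc (0 : ℝ) 1 =>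
    (1 - (p.2 : ℝ)) * side G e p.1.toProd.1 + p.2 * side G e p.1.toProd.2)
  have hu : Continuous fun p : G.Dart × Icc (0 : ℝ) 1 => (p.2 : ℝ) :=
    continuous_subtype_val.comp continuous_snd
  have hside : ∀ g : G.Dart → ℝ, Continuous fun p : G.Dart × Icc (0 : ℝ) 1 => g p.1 :=
    fun g => continuous_of_discreteTopology.comp continuous_fst
  exact ((continuous_const.sub hu).mul (hside fun d => side G e d.toProd.1)).add
    (hu.mul (hside fun d => side G e d.toProd.2))

variable {G}

theorem eq_mk_of_edgeCoord_eq (hacyc : G.IsAcyclic) {e : G.Dart} {c : ℝ} (hc : c ∈ Ioo 0 1)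
    {x : TreeSpace G} (hx : edgeCoord G e x = c) :
    x = Quot.mk _ (e, ⟨c, Ioo_subset_Icc_self hc⟩) := by
  induction x using Quot.ind with | _ p =>
  obtain ⟨d, u⟩ := p
  change edgeCoordAux G e (d, u) = c at hx
  by_cases hde : d.edge = e.edge
  · rcases (dart_edge_eq_iff d e).1 hde with rfl | rfl
    · simp only [edgeCoordAux, side_fst hacyc, side_snd] at hx
      congr
      ext
      linarith
    · have h1 : side G e e.symm.toProd.1 = 1 := side_snd e
      have h2 : side G e e.symm.toProd.2 = 0 := side_fst hacyc e
      simp only [edgeCoordAux, h1, h2] at hx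
      exact Quot.sound (.inl ⟨rfl, by simp only; linarith⟩)
  · simp only [edgeCoordAux, side_fst_eq_side_snd hde] at hx
    rcases side_eq_zero_or_one e d.toProd.2 with h | h <;> rw [h] at hx <;>
      linarith [hc.1, hc.2]

theorem exists_level_of_notMem_range_vertexPt (hacyc : G.IsAcyclic) {x : TreeSpace G}
    (hx : x ∉ range (vertexPt G)) :
    ∃ f : TreeSpace G → ℝ, Continuous f ∧ ∀ᶠ c in 𝓝 (f x), (f ⁻¹' {c}).Subsingleton := by
  obtain ⟨e, u, hu, rfl⟩ := exists_eq_mk_of_notMem_range_vertexPt G hx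
  refine ⟨edgeCoord G e, continuous_edgeCoord G e, ?_⟩
  have hval : edgeCoord G e (Quot.mk _ (e, u)) = u := by
    change edgeCoordAux G e (e, u) = u
    simp only [edgeCoordAux, side_fst hacyc, side_snd]
    ring
  rw [hval]
  filter_upwards [Ioo_mem_nhds hu.1 hu.2] with c hc y hy z hz
  exact (eq_mk_of_edgeCoord_eq hacyc hc hy).trans (eq_mk_of_edgeCoord_eq hacyc hc hz).symm

end TreeSpace

theorem subset_convH {X : Type*} [TopologicalSpace X] (A : Set X) : A ⊆ ConvH A :=
  fun _ hx => mem_sInter.2 fun _ hC => hC.1 hx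

theorem TreeSpace.mem_convH_of_homeomorph_unitInterval {V : Type*} [Finite V]
    {G : SimpleGraph V} (hacyc : G.IsAcyclic) {Y : Set (TreeSpace G)} (h : Y ≃ₜ unitInterval)
    {A : Set (TreeSpace G)} {p₁ p₂ p₃ : TreeSpace G} (hp₁ : p₁ ∈ Y) (hp₂ : p₂ ∈ Y)
    (hp₃ : p₃ ∈ Y)
    (h12 : ((h ⟨p₁, hp₁⟩ : unitInterval) : ℝ) ≤ ((h ⟨p₂, hp₂⟩ : unitInterval) : ℝ))
    (h23 : ((h ⟨p₂, hp₂⟩ : unitInterval) : ℝ) ≤ ((h ⟨p₃, hp₃⟩ : unitInterval) : ℝ))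
    (h1 : p₁ ∈ A) (h3 : p₃ ∈ A) : p₂ ∈ ConvH A :=
  mem_sInter.2 fun _ ⟨hAC, hCc, hCp⟩ =>
    mem_of_isPreconnected_of_homeomorph_unitInterval (finite_range_vertexPt G)
      (fun _ hx => exists_level_of_notMem_range_vertexPt hacyc hx) h hp₁ hp₂ hp₃ h12 h23 hCc hCp
      (hAC h1) (hAC h3)

theorem MergeTreeData.eq_of_desc_of_isLeafNode (d : MergeTreeData) {v w : Fin d.n}
    (hw : d.IsLeafNode w) (hvw : d.Desc v w) : v = w := by
  obtain ⟨k, hk⟩ := hvw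
  induction k generalizing v with
  | zero => exact hk
  | succ k ih => exact hw v (ih hk)

theorem stmt18_general {V : Type} [Fintype V] (G : SimpleGraph V)
    (hacyc : G.IsAcyclic)
    (d : MergeTreeData)
    (x : d.Leaf → TreeSpace G) (hx : ConfCond d x)
    (Y : Set (TreeSpace G)) (h : ↥Y ≃ₜ ↥unitInterval) (hY : ∀ l, x l ∈ Y)
    (v : Fin d.n) (l₁ l₂ l₃ : d.Leaf)
    (h12 : ((h ⟨x l₁, hY l₁⟩ : ↥unitInterval) : ℝ) ≤ ((h ⟨x l₂, hY l₂⟩ : ↥unitInterval) : ℝ))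
    (h23 : ((h ⟨x l₂, hY l₂⟩ : ↥unitInterval) : ℝ) ≤ ((h ⟨x l₃, hY l₃⟩ : ↥unitInterval) : ℝ))
    (hd1 : d.Desc l₁.1 v) (hd3 : d.Desc l₃.1 v) :
    d.Desc l₂.1 v := by
  have hmem : ∀ {l : d.Leaf} {w : Fin d.n}, d.Desc l.1 w →
      x l ∈ ⋃ l' : d.Leaf, if d.Desc l'.1 w then ({x l'} : Set (TreeSpace G)) else ∅ :=
    fun hl => mem_iUnion.2 ⟨_, by rw [if_pos hl]; rfl⟩
  have hv : x l₂ ∈ hullOf d (fun l => {x l}) v :=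
    TreeSpace.mem_convH_of_homeomorph_unitInterval hacyc h (hY l₁) (hY l₂) (hY l₃) h12 h23
      (hmem hd1) (hmem hd3)
  have hl₂ : x l₂ ∈ hullOf d (fun l => {x l}) l₂.1 := subset_convH _ (hmem ⟨0, rfl⟩)
  rcases hx.2 v l₂.1 ⟨x l₂, hv, hl₂⟩ with hvl₂ | hl₂v
  · exact ⟨0, (d.eq_of_desc_of_isLeafNode l₂.2 hvl₂).symm⟩
  · exact hl₂v

/-- If a configuration `x ∈ Conf(X,T)` has all its points on a subset `Y ⊆ X` homeomorphic
to the unit interval via `h`, then for every node `v` of `T` the set of leaves descending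
from `v` is an interval with respect to the induced order: it is closed under betweenness. -/
theorem stmt18 {V : Type} [Fintype V] (G : SimpleGraph V)
    (hconn : G.Connected) (hacyc : G.IsAcyclic)
    (d : MergeTreeData) (hgen : d.Generic)
    (x : d.Leaf → TreeSpace G) (hx : ConfCond d x)
    (Y : Set (TreeSpace G)) (h : ↥Y ≃ₜ ↥unitInterval) (hY : ∀ l, x l ∈ Y)
    (v : Fin d.n) (l₁ l₂ l₃ : d.Leaf)
    (h12 : ((h ⟨x l₁, hY l₁⟩ : ↥unitInterval) : ℝ) ≤ ((h ⟨x l₂, hY l₂⟩ : ↥unitInterval) : ℝ))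
    (h23 : ((h ⟨x l₂, hY l₂⟩ : ↥unitInterval) : ℝ) ≤ ((h ⟨x l₃, hY l₃⟩ : ↥unitInterval) : ℝ))
    (hd1 : d.Desc l₁.1 v) (hd3 : d.Desc l₃.1 v) :
    d.Desc l₂.1 v :=
  stmt18_general G hacyc d x hx Y h hY v l₁ l₂ l₃ h12 h23 hd1 hd3
end
end
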